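/- arXiv:2204.08186 — 2 statements merged into one kernel-verified Lean document; each statement's English description precedes it below -/
import Mathlib

section
/- Let b be a nondegenerate bilinear form on ℝⁿ. If (A^{⋆L})^{⋆L} = A holds for all linear endomorphisms A of ℝⁿ, then b is symmetric or skew-symmetric; conversely, if b is symmetric or skew-symmetric, then (A^{⋆L})^{⋆L} = A for all A. -/
/-!
Testing the involution property on rank-one operators `u ↦ b y u • x` forces the identity
`b z y * b v x = b y z * b x v`, so that `b` is proportional to its transpose, `b = c • b.flip`;
applying this twice gives `c * c = 1`, i.e. `c = ±1`. Conversely, if `b.flip = ε • b` with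
`ε * ε = 1`, then `A` is itself a left adjoint of any left adjoint of `A`, and left adjoints
are unique for a nondegenerate form.
-/

namespace LinearMap.BilinForm

section CommSemiring

variable {R M : Type*} [CommSemiring R] [AddCommMonoid M] [Module R M]
  {b : LinearMap.BilinForm R M}

theorem isAdjointPair_swap_of_flip_eq_smul {ε : R} (hε : ε * ε = 1) (hb : b.flip = ε • b)
    {f g : M → M} (h : IsAdjointPair b b f g) : IsAdjointPair b b g f := by
  have hflip : ∀ x y, b x y = ε * b y x := fun x y => by
    simpa using LinearMap.congr_fun₂ hb y x
  intro x y
  rw [hflip, ← h, hflip, ← mul_assoc, hε, one_mul]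

end CommSemiring

section Field

variable {K V : Type*} [Field K] [AddCommGroup V] [Module K V] {b : LinearMap.BilinForm K V}

theorem exists_flip_eq_smul_of_apply_mul_apply_eq
    (hb : ∀ x y z v, b z y * b v x = b y z * b x v) :
    ∃ ε : K, ε * ε = 1 ∧ b.flip = ε • b := by
  by_cases hzero : ∀ y z, b y z = 0
  · exact ⟨1, one_mul 1, LinearMap.ext₂ fun x v => by simp [hzero]⟩
  push Not at hzero
  obtain ⟨y, z, hyz⟩ := hzero
  set c := b z y / b y z
  have hprop : ∀ x v, b x v = c * b v x := fun x v => by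
    rw [div_mul_eq_mul_div, hb, mul_div_cancel_left₀ _ hyz]
  have hc : c * c = 1 := by
    have h := hprop y z
    rw [hprop z y, ← mul_assoc] at h
    exact mul_right_cancel₀ hyz (by rw [one_mul, ← h])
  refine ⟨c, hc, LinearMap.ext₂ fun x v => ?_⟩
  simp only [flip_apply, smul_apply, smul_eq_mul]
  rw [hprop x v, ← mul_assoc, hc, one_mul]

theorem flip_eq_smul_iff_symm_or_skew :
    (∃ ε : K, ε * ε = 1 ∧ b.flip = ε • b) ↔
      (∀ x y, b x y = b y x) ∨ (∀ x y, b x y = -b y x) := by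
  constructor
  · rintro ⟨ε, hε, hb⟩
    have hflip : ∀ x y, b x y = ε * b y x := fun x y => by
      simpa using LinearMap.congr_fun₂ hb y x
    rcases mul_self_eq_one_iff.mp hε with rfl | rfl
    · exact Or.inl fun x y => by simpa using hflip x y
    · exact Or.inr fun x y => by simpa using hflip x y
  · rintro (hs | hs)
    · exact ⟨1, one_mul 1, LinearMap.ext₂ fun x y => by simp [hs y x]⟩
    · exact ⟨-1, by norm_num, LinearMap.ext₂ fun x y => by simp [hs y x]⟩

variable [FiniteDimensional K V]

theorem apply_mul_apply_eq_of_leftAdjoint_involutive (hnd : b.Nondegenerate)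
    (H : ∀ A AL ALL : V →ₗ[K] V, IsAdjointPair b b AL A → IsAdjointPair b b ALL AL → ALL = A)
    (x y z v : V) : b z y * b v x = b y z * b x v := by
  set T := symmCompOfNondegenerate b.flip b hnd
  have hT : ∀ w u, b (T w) u = b u w := fun w u => symmCompOfNondegenerate_left_apply _ hnd u w
  have hA := H ((b y).smulRight x) ((b.flip x).smulRight y) ((b.flip y).smulRight (T x))
    (fun u w => by simp [mul_comm]) (fun u w => by simp [hT, mul_comm])
  simpa [hT] using congr_arg (b · v) (LinearMap.congr_fun hA z)

theorem leftAdjoint_involutive_iff_flip_eq_smul (hnd : b.Nondegenerate) :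
    (∀ A AL ALL : V →ₗ[K] V, IsAdjointPair b b AL A → IsAdjointPair b b ALL AL → ALL = A) ↔
      ∃ ε : K, ε * ε = 1 ∧ b.flip = ε • b := by
  refine ⟨fun H => exists_flip_eq_smul_of_apply_mul_apply_eq
    (apply_mul_apply_eq_of_leftAdjoint_involutive hnd H), ?_⟩
  rintro ⟨ε, hε, hb⟩ A AL ALL hAL hALL
  exact isAdjointPair_unique_of_nondegenerate b hnd AL ALL A hALL
    (isAdjointPair_swap_of_flip_eq_smul hε hb hAL)

end Field

end LinearMap.BilinForm

theorem left_adjoint_involution_iff_symm_or_skew (n : ℕ)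
    (b : LinearMap.BilinForm ℝ (EuclideanSpace ℝ (Fin n)))
    (hb : b.Nondegenerate) :
    (∀ A AL ALL : EuclideanSpace ℝ (Fin n) →ₗ[ℝ] EuclideanSpace ℝ (Fin n),
        (∀ x y, b (AL x) y = b x (A y)) →
        (∀ x y, b (ALL x) y = b x (AL y)) → ALL = A) ↔
      ((∀ x y, b x y = b y x) ∨ (∀ x y, b x y = - b y x)) :=
  (LinearMap.BilinForm.leftAdjoint_involutive_iff_flip_eq_smul hb).trans
    LinearMap.BilinForm.flip_eq_smul_iff_symm_or_skew
end

section
/- Let b be a nondegenerate bilinear form on ℝⁿ. Then A^{⋆L} = A^{⋆R} for all linear endomorphisms A of ℝⁿ if and only if b is symmetric or skew-symmetric. -/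
/-!
If `b` is symmetric or skew-symmetric, transposing the identity defining a right adjoint of `A`
shows that it is also a left adjoint of `A`, and left adjoints are unique for nondegenerate `b`.

Conversely, nondegeneracy in finite dimension gives a map `χ` with `b w (χ z) = b z w`.
For the rank-one map `A = b x (·) • u`, a left adjoint is `b (·) u • x` and a right adjoint is
`b u (·) • χ x`; if they agree, pairing with `y` gives `b v u * b y x = b u v * b x y` for all
`u v x y`. Taking `(x, y) = (u, v)` with `b u v ≠ 0` forces `b v u = ± b u v`, and then the same
identity makes the sign uniform.
-/

theorem symm_or_skew_of_mul_swap_eq {α R : Type*} [CommRing R] [NoZeroDivisors R]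
    (f : α → α → R) (h : ∀ u v x y, f v u * f y x = f u v * f x y) :
    (∀ x y, f x y = f y x) ∨ (∀ x y, f x y = -f y x) := by
  by_cases hzero : ∀ u v, f u v = 0
  · exact Or.inl fun x y => by rw [hzero, hzero]
  push Not at hzero
  obtain ⟨u, v, huv⟩ := hzero
  rcases mul_self_eq_mul_self_iff.mp (h u v u v) with hsymm | hskew
  · refine Or.inl fun x y => (mul_left_cancel₀ huv ?_).symm
    rw [← h, hsymm]
  · refine Or.inr fun x y => mul_left_cancel₀ huv ?_
    rw [mul_neg, ← h u v y x, hskew, neg_mul, neg_neg]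

namespace LinearMap

section CommRing

variable {R M : Type*} [CommRing R] [AddCommGroup M] [Module R M] (b : LinearMap.BilinForm R M)

theorem isAdjointPair_smulRight_flip (x u : M) :
    IsAdjointPair b b ((b.flip u).smulRight x) ((b x).smulRight u) := fun p q => by
  simp only [smulRight_apply, BilinForm.flip_apply, map_smul, smul_apply, smul_eq_mul, mul_comm]

theorem isAdjointPair_smulRight_of_apply_eq {x z : M} (hz : ∀ w, b w z = b x w) (u : M) :
    IsAdjointPair b b ((b x).smulRight u) ((b u).smulRight z) := fun p q => by
  simp only [smulRight_apply, map_smul, smul_apply, smul_eq_mul, hz, mul_comm]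

variable {b}

theorem IsAdjointPair.swap_of_symm_or_skew
    (hb : (∀ x y, b x y = b y x) ∨ (∀ x y, b x y = -b y x)) {f g : M → M}
    (hfg : IsAdjointPair b b f g) : IsAdjointPair b b g f := fun x y => by
  rcases hb with hsymm | hskew
  · rw [hsymm, ← hfg, hsymm]
  · rw [hskew, ← hfg, hskew, neg_neg]

end CommRing

theorem mul_swap_eq_of_forall_adjoint_eq {K V : Type*} [Field K] [AddCommGroup V] [Module K V]
    [FiniteDimensional K V] {b : LinearMap.BilinForm K V} (hb : b.Nondegenerate)
    (H : ∀ A AL AR : V →ₗ[K] V, IsAdjointPair b b AL A → IsAdjointPair b b A AR → AL = AR)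
    (u v x y : V) : b v u * b y x = b u v * b x y := by
  set χ := b.symmCompOfNondegenerate b.flip hb.flip
  have hχ : ∀ w, b w (χ x) = b x w := fun w => b.symmCompOfNondegenerate_left_apply hb.flip w x
  have hadj := H _ _ _ (b.isAdjointPair_smulRight_flip x u)
    (b.isAdjointPair_smulRight_of_apply_eq hχ u)
  have := congr(b y ($hadj v))
  simpa only [smulRight_apply, BilinForm.flip_apply, map_smul, smul_eq_mul, hχ] using this

end LinearMap

theorem left_eq_right_adjoint_iff_symm_or_skew (n : ℕ)
    (b : LinearMap.BilinForm ℝ (EuclideanSpace ℝ (Fin n)))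
    (hb : b.Nondegenerate) :
    (∀ A AL AR : EuclideanSpace ℝ (Fin n) →ₗ[ℝ] EuclideanSpace ℝ (Fin n),
        (∀ x y, b (AL x) y = b x (A y)) →
        (∀ x y, b (A x) y = b x (AR y)) → AL = AR) ↔
      ((∀ x y, b x y = b y x) ∨ (∀ x y, b x y = - b y x)) := by
  constructor
  · intro H
    exact symm_or_skew_of_mul_swap_eq (fun x y => b x y)
      (LinearMap.mul_swap_eq_of_forall_adjoint_eq hb H)
  · intro hsymm_or_skew A AL AR hL hR
    exact b.isAdjointPair_unique_of_nondegenerate hb A AL AR hL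
      (LinearMap.IsAdjointPair.swap_of_symm_or_skew hsymm_or_skew hR)
end
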